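/- Assume [E : F] = 2. Then L is thin if and only if d_i = 0 for every i ≥ 2, where d_i = dim_F(C_i ∩ L_1); and in this case dim_F L_i = 2 for every i ≠ 2 (and dim_F L_2 = 1). -/

import Mathlib

open Submodule

/-- The `i`-th two-step centraliser `C_i = {a ∈ M_1 | ⁅a, u⁆ = 0 for all u ∈ M_i}`. -/
def twoStepCentraliser {E : Type*} [Field E] {M : Type*} [LieRing M] [LieAlgebra E M]
    (Mc : ℕ → Submodule E M) (i : ℕ) : Submodule E M where
  carrier := {a : M | a ∈ Mc 1 ∧ ∀ u ∈ Mc i, ⁅a, u⁆ = 0}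
  add_mem' := by
    rintro a b ⟨ha1, ha2⟩ ⟨hb1, hb2⟩
    exact ⟨add_mem ha1 hb1, fun u hu => by rw [add_lie, ha2 u hu, hb2 u hu, add_zero]⟩
  zero_mem' := ⟨zero_mem _, fun u _ => zero_lie u⟩
  smul_mem' := by
    rintro c a ⟨ha1, ha2⟩
    exact ⟨Submodule.smul_mem _ c ha1, fun u hu => by rw [smul_lie, ha2 u hu, smul_zero]⟩

/-- `Mc` is a grading of `M` as a graded Lie algebra of maximal class over `E`,
generated in degree 1. -/
structure IsMaximalClass (E : Type*) [Field E] (M : Type*) [LieRing M] [LieAlgebra E M]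
    (Mc : ℕ → Submodule E M) : Prop where
  zero_bot : Mc 0 = ⊥
  internal : DirectSum.IsInternal Mc
  lie_mem : ∀ i j : ℕ, ∀ x ∈ Mc i, ∀ y ∈ Mc j, ⁅x, y⁆ ∈ Mc (i + j)
  finrank_one : Module.finrank E ↥(Mc 1) = 2
  finrank_eq_one : ∀ i : ℕ, 2 ≤ i → Module.finrank E ↥(Mc i) = 1
  span_succ : ∀ i : ℕ, 1 ≤ i →
    Mc (i + 1) = Submodule.span E {z : M | ∃ v ∈ Mc i, ∃ a ∈ Mc 1, z = ⁅v, a⁆}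

/-- The homogeneous components of the Lie `F`-subalgebra generated by `X` and `Y` in
degree 1:  `L_1 = span_F {X, Y}` and `L_{i+1} = span_F {⁅v, a⁆ : v ∈ L_i, a ∈ L_1}`. -/
def Lcomp (F : Type*) [Field F] {M : Type*} [LieRing M] [Module F M]
    (X Y : M) : ℕ → Submodule F M
  | 0 => ⊥
  | 1 => Submodule.span F {X, Y}
  | (i + 2) => Submodule.span F
      {z : M | ∃ v ∈ Lcomp F X Y (i + 1), ∃ a ∈ Submodule.span F ({X, Y} : Set M), z = ⁅v, a⁆}

/-- `d_i = dim_F (C_i ∩ L_1)`. -/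
noncomputable def dSeq (E : Type*) [Field E] {M : Type*} [LieRing M] [LieAlgebra E M]
    (Mc : ℕ → Submodule E M) (F : Type*) [Field F] [Algebra F E] [LieAlgebra F M]
    [IsScalarTower F E M] (X Y : M) (i : ℕ) : ℕ :=
  Module.finrank F
    ↥(Submodule.restrictScalars F (twoStepCentraliser Mc i) ⊓ Lcomp F X Y 1)

/-- The covering property: `⁅u, L_1⁆ = L_{i+1}` for every `i ≥ 1` and nonzero `u ∈ L_i`. -/
def CoveringProperty (F : Type*) [Field F] {M : Type*} [LieRing M] [Module F M]
    (X Y : M) : Prop :=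
  ∀ i : ℕ, 1 ≤ i → ∀ u ∈ Lcomp F X Y i, u ≠ 0 →
    Submodule.span F {z : M | ∃ a ∈ Lcomp F X Y 1, z = ⁅u, a⁆} = Lcomp F X Y (i + 1)

/-!
Over `F` every `M_i` with `i ≥ 2` is a plane containing `L_i`. For `0 ≠ u ∈ M_i`, the kernel
of `ad u` on `L_1` is `C_i ∩ L_1`, so `⁅u, L_1⁆` has `F`-dimension `2 - d_i`, and it is nonzero
because `L_1` spans `M_1` over `E`. Hence `d_i = 0` makes `⁅u, L_1⁆ = M_{i+1}`, so `L_i = M_i`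
for all `i ≥ 3` once every `d_i` vanishes. Conversely, if `L_i = M_i` and `d_i = 1`, the
covering property applied to `u` and `ε u` with `ε ∈ E \ F` makes the `F`-line `⁅u, L_1⁆`
stable under `ε`, which is absurd; so under the covering property a single full component
propagates upwards with `d_j = 0`. Finally `d_2 = 0`, since an element of `C_2` lies in
`C_i` or `C_{i+1}` for every `i ≥ 2`.
-/

open Module

theorem lie_smul_add_smul_pair {R M : Type*} [CommRing R] [LieRing M] [LieAlgebra R M]
    (X Y : M) (s t p q : R) :
    ⁅s • X + t • Y, p • X + q • Y⁆ = (s * q - t * p) • ⁅X, Y⁆ := by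
  have hskew : ⁅Y, X⁆ = -⁅X, Y⁆ := by rw [← lie_skew]
  simp only [add_lie, lie_add, smul_lie, lie_smul, lie_self, smul_zero, add_zero, zero_add,
    hskew, smul_neg, smul_smul]
  module

theorem lie_lie_lie_eq_zero {L : Type*} [LieRing L] {u x c : L} (huc : ⁅u, c⁆ = 0)
    (hxc : ⁅⁅x, c⁆, c⁆ = 0) : ⁅⁅⁅u, x⁆, c⁆, c⁆ = 0 := by
  rw [lie_lie u x c, huc, lie_zero, sub_zero, lie_lie u ⁅x, c⁆ c, hxc, lie_zero, huc, lie_zero,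
    sub_zero]

theorem LinearMap.finrank_map_add_finrank_ker_inf {K V : Type*} [Field K] [AddCommGroup V]
    [Module K V] (f : V →ₗ[K] V) (p : Submodule K V) [FiniteDimensional K p] :
    finrank K (p.map f) + finrank K ↥(LinearMap.ker f ⊓ p) = finrank K p := by
  have h := (f.domRestrict p).finrank_range_add_finrank_ker
  have hker : (LinearMap.ker f).comap p.subtype = (LinearMap.ker f ⊓ p).comap p.subtype := by
    ext x
    simp
  rwa [LinearMap.range_domRestrict, LinearMap.ker_domRestrict, hker,
    (comapSubtypeEquivOfLe inf_le_right).finrank_eq] at h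

theorem finrank_span_pair {K V : Type*} [Field K] [AddCommGroup V] [Module K V] {x y : V}
    (h : LinearIndependent K ![x, y]) : finrank K (span K {x, y}) = 2 := by
  rw [← Matrix.range_cons_cons_empty x y ![], finrank_span_eq_card h, Fintype.card_fin]

theorem Submodule.finrank_restrictScalars {F E V : Type*} [Field F] [Field E] [Algebra F E]
    [AddCommGroup V] [Module F V] [Module E V] [IsScalarTower F E V] (p : Submodule E V) :
    finrank F (p.restrictScalars F) = finrank F E * finrank E p := by
  rw [((restrictScalarsEquiv F E V p).restrictScalars F).finrank_eq, finrank_mul_finrank]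

theorem exists_notMem_range_algebraMap_of_finrank_ne_one {F E : Type*} [Field F] [Field E]
    [Algebra F E] (h : finrank F E ≠ 1) : ∃ ε : E, ε ∉ Set.range (algebraMap F E) := by
  by_contra! hε
  exact h (Algebra.finrank_eq_one_iff_bijective_algebraMap.2
    ⟨(algebraMap F E).injective, fun ε => hε ε⟩)

namespace IsMaximalClass

variable {E M : Type*} [Field E] [LieRing M] [LieAlgebra E M] {Mc : ℕ → Submodule E M}

theorem finiteDimensional (hM : IsMaximalClass E M Mc) {i : ℕ} (hi : 1 ≤ i) :
    FiniteDimensional E (Mc i) := by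
  refine Module.finite_of_finrank_pos ?_
  rcases hi.eq_or_lt with rfl | hi
  · rw [hM.finrank_one]; norm_num
  · rw [hM.finrank_eq_one i hi]; norm_num

theorem exists_ne_zero (hM : IsMaximalClass E M Mc) {i : ℕ} (hi : 2 ≤ i) :
    ∃ u ∈ Mc i, u ≠ 0 := by
  refine (Submodule.ne_bot_iff _).1 fun h => ?_
  have h1 := hM.finrank_eq_one i hi
  rw [h, finrank_bot] at h1
  exact zero_ne_one h1

theorem eq_span_singleton (hM : IsMaximalClass E M Mc) {i : ℕ} (hi : 2 ≤ i) {u : M}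
    (hu : u ∈ Mc i) (hu0 : u ≠ 0) : Mc i = E ∙ u := by
  have := hM.finiteDimensional (i := i) (by omega)
  refine (eq_of_le_of_finrank_le ((span_singleton_le_iff_mem _ _).2 hu) ?_).symm
  rw [finrank_span_singleton hu0, hM.finrank_eq_one i hi]

theorem eq_span_pair (hM : IsMaximalClass E M Mc) {X Y : M} (hX : X ∈ Mc 1) (hY : Y ∈ Mc 1)
    (hXY : LinearIndependent E ![X, Y]) : Mc 1 = span E {X, Y} := by
  have := hM.finiteDimensional le_rfl
  have hle : span E {X, Y} ≤ Mc 1 := span_le.2 (Set.insert_subset hX (by simpa using hY))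
  refine (eq_of_le_of_finrank_le hle ?_).symm
  rw [hM.finrank_one, finrank_span_pair hXY]

theorem exists_lie_ne_zero (hM : IsMaximalClass E M Mc) {i : ℕ} (hi : 2 ≤ i) {u : M}
    (hu : u ∈ Mc i) (hu0 : u ≠ 0) : ∃ a ∈ Mc 1, ⁅u, a⁆ ≠ 0 := by
  by_contra! h
  obtain ⟨w, hw, hw0⟩ := hM.exists_ne_zero (i := i + 1) (by omega)
  rw [hM.span_succ i (by omega)] at hw
  refine hw0 ((span_eq_bot.2 ?_).le hw)
  rintro z ⟨v, hv, a, ha, rfl⟩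
  obtain ⟨c, rfl⟩ := mem_span_singleton.1 (hM.eq_span_singleton hi hu hu0 ▸ hv)
  rw [smul_lie, h a ha, smul_zero]

theorem lie_ne_zero (hM : IsMaximalClass E M Mc) {X Y : M} (h1 : Mc 1 = span E {X, Y}) :
    ⁅X, Y⁆ ≠ 0 := by
  intro h0
  obtain ⟨w, hw, hw0⟩ := hM.exists_ne_zero le_rfl
  rw [hM.span_succ 1 le_rfl] at hw
  refine hw0 ((span_eq_bot.2 ?_).le hw)
  rintro z ⟨v, hv, a, ha, rfl⟩
  obtain ⟨s, t, rfl⟩ := mem_span_pair.1 (h1 ▸ hv)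
  obtain ⟨p, q, rfl⟩ := mem_span_pair.1 (h1 ▸ ha)
  rw [lie_smul_add_smul_pair, h0, smul_zero]

theorem mem_twoStepCentraliser_iff (hM : IsMaximalClass E M Mc) {i : ℕ} (hi : 2 ≤ i) {u : M}
    (hu : u ∈ Mc i) (hu0 : u ≠ 0) {a : M} :
    a ∈ twoStepCentraliser Mc i ↔ a ∈ Mc 1 ∧ ⁅u, a⁆ = 0 := by
  refine ⟨fun ha => ⟨ha.1, by rw [← lie_skew, ha.2 u hu, neg_zero]⟩,
    fun ⟨ha1, hua⟩ => ⟨ha1, fun w hw => ?_⟩⟩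
  obtain ⟨c, rfl⟩ := mem_span_singleton.1 (hM.eq_span_singleton hi hu hu0 ▸ hw)
  rw [lie_smul, ← lie_skew, hua, neg_zero, smul_zero]

theorem mem_twoStepCentraliser_or_succ (hM : IsMaximalClass E M Mc) {c : M}
    (hc : c ∈ twoStepCentraliser Mc 2) {i : ℕ} (hi : 2 ≤ i) :
    c ∈ twoStepCentraliser Mc i ∨ c ∈ twoStepCentraliser Mc (i + 1) := by
  induction i, hi using Nat.le_induction with
  | base => exact Or.inl hc
  | succ i hi ih =>
    refine or_iff_not_imp_left.2 fun hc1 => ?_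
    obtain ⟨u, hu, hu0⟩ := hM.exists_ne_zero hi
    obtain ⟨x, hx, hv0⟩ := hM.exists_lie_ne_zero hi hu hu0
    have hv := hM.lie_mem i 1 u hu x hx
    have huc : ⁅u, c⁆ = 0 := ((hM.mem_twoStepCentraliser_iff hi hu hu0).1 (ih.resolve_right hc1)).2
    have hxc : ⁅⁅x, c⁆, c⁆ = 0 := by
      rw [← lie_skew, hc.2 _ (hM.lie_mem 1 1 x hx c hc.1), neg_zero]
    have hvc0 : ⁅⁅u, x⁆, c⁆ ≠ 0 := fun h =>
      hc1 ((hM.mem_twoStepCentraliser_iff (by omega) hv hv0).2 ⟨hc.1, h⟩)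
    exact (hM.mem_twoStepCentraliser_iff (by omega) (hM.lie_mem _ 1 _ hv c hc.1) hvc0).2
      ⟨hc.1, lie_lie_lie_eq_zero huc hxc⟩

theorem finrank_restrictScalars (hM : IsMaximalClass E M Mc) {F : Type*} [Field F] [Algebra F E]
    [Module F M] [IsScalarTower F E M] (hEF : finrank F E = 2) {i : ℕ} (hi : 2 ≤ i) :
    finrank F ((Mc i).restrictScalars F) = 2 := by
  rw [Submodule.finrank_restrictScalars, hEF, hM.finrank_eq_one i hi]

end IsMaximalClass

section Lcomp

variable {F M : Type*} [Field F] [LieRing M] [LieAlgebra F M] {X Y : M}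

theorem Lcomp_one : Lcomp F X Y 1 = span F {X, Y} := rfl

instance : FiniteDimensional F (Lcomp F X Y 1) :=
  FiniteDimensional.span_of_finite F (Set.toFinite _)

theorem left_mem_Lcomp_one : X ∈ Lcomp F X Y 1 := subset_span (Set.mem_insert _ _)

theorem right_mem_Lcomp_one : Y ∈ Lcomp F X Y 1 := subset_span (Set.mem_insert_of_mem _ rfl)

theorem Lcomp_succ {i : ℕ} (hi : 1 ≤ i) :
    Lcomp F X Y (i + 1) =
      span F {z : M | ∃ v ∈ Lcomp F X Y i, ∃ a ∈ Lcomp F X Y 1, z = ⁅v, a⁆} := by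
  obtain ⟨k, rfl⟩ := Nat.exists_eq_add_of_le' hi
  rfl

theorem span_lie_eq_map_ad (u : M) :
    span F {z : M | ∃ a ∈ Lcomp F X Y 1, z = ⁅u, a⁆} =
      (Lcomp F X Y 1).map (LieAlgebra.ad F M u) := by
  rw [← span_eq ((Lcomp F X Y 1).map (LieAlgebra.ad F M u))]
  congr 1
  ext z
  simp [eq_comm]

theorem lie_mem_Lcomp_succ {i : ℕ} (hi : 1 ≤ i) {u a : M} (hu : u ∈ Lcomp F X Y i)
    (ha : a ∈ Lcomp F X Y 1) : ⁅u, a⁆ ∈ Lcomp F X Y (i + 1) := by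
  rw [Lcomp_succ hi]
  exact subset_span ⟨u, hu, a, ha, rfl⟩

theorem map_ad_le_Lcomp_succ {i : ℕ} (hi : 1 ≤ i) {u : M} (hu : u ∈ Lcomp F X Y i) :
    (Lcomp F X Y 1).map (LieAlgebra.ad F M u) ≤ Lcomp F X Y (i + 1) := by
  rintro _ ⟨a, ha, rfl⟩
  exact lie_mem_Lcomp_succ hi hu ha

theorem Lcomp_two : Lcomp F X Y 2 = F ∙ ⁅X, Y⁆ := by
  refine le_antisymm ?_ ?_
  · rw [Lcomp_succ le_rfl, span_le]
    rintro z ⟨v, hv, a, ha, rfl⟩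
    obtain ⟨s, t, rfl⟩ := mem_span_pair.1 hv
    obtain ⟨p, q, rfl⟩ := mem_span_pair.1 ha
    rw [lie_smul_add_smul_pair]
    exact smul_mem _ _ (mem_span_singleton_self _)
  · rw [span_singleton_le_iff_mem]
    exact lie_mem_Lcomp_succ le_rfl left_mem_Lcomp_one right_mem_Lcomp_one

theorem map_ad_Lcomp_one {u : M} (hu : u ∈ Lcomp F X Y 1) (hu0 : u ≠ 0) :
    (Lcomp F X Y 1).map (LieAlgebra.ad F M u) = Lcomp F X Y 2 := by
  refine le_antisymm (map_ad_le_Lcomp_succ le_rfl hu) ?_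
  rw [Lcomp_two, span_singleton_le_iff_mem]
  obtain ⟨s, t, rfl⟩ := mem_span_pair.1 hu
  suffices ∃ p q : F, s * q - t * p = 1 by
    obtain ⟨p, q, hpq⟩ := this
    refine ⟨p • X + q • Y, add_mem (smul_mem _ p left_mem_Lcomp_one)
      (smul_mem _ q right_mem_Lcomp_one), ?_⟩
    rw [LieAlgebra.ad_apply, lie_smul_add_smul_pair, hpq, one_smul]
  by_cases hs : s = 0
  · have ht : t ≠ 0 := by rintro rfl; simp [hs] at hu0
    exact ⟨-t⁻¹, 0, by simp [hs, ht]⟩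
  · exact ⟨0, s⁻¹, by simp [hs]⟩

end Lcomp

section MaximalClassOverSubfield

variable {E M : Type*} [Field E] [LieRing M] [LieAlgebra E M] {Mc : ℕ → Submodule E M}
  {F : Type*} [Field F] [LieAlgebra F M] {X Y : M}

theorem exists_lie_ne_zero_of_mem_Lcomp_one (hM : IsMaximalClass E M Mc)
    (h1 : Mc 1 = span E {X, Y}) {i : ℕ} (hi : 2 ≤ i) {u : M} (hu : u ∈ Mc i) (hu0 : u ≠ 0) :
    ∃ a ∈ Lcomp F X Y 1, ⁅u, a⁆ ≠ 0 := by
  obtain ⟨x, hx, hux⟩ := hM.exists_lie_ne_zero hi hu hu0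
  by_contra! h
  obtain ⟨s, t, rfl⟩ := mem_span_pair.1 (h1 ▸ hx)
  rw [lie_add, lie_smul, lie_smul, h X left_mem_Lcomp_one, h Y right_mem_Lcomp_one] at hux
  simp at hux

variable [Algebra F E] [IsScalarTower F E M]

variable (F) in
theorem Lcomp_le_restrictScalars (hM : IsMaximalClass E M Mc) (h1 : Mc 1 = span E {X, Y})
    {i : ℕ} (hi : 1 ≤ i) : Lcomp F X Y i ≤ (Mc i).restrictScalars F := by
  have hL1 : Lcomp F X Y 1 ≤ (Mc 1).restrictScalars F := h1 ▸ span_le_restrictScalars F E _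
  induction i, hi using Nat.le_induction with
  | base => exact hL1
  | succ i hi ih =>
    rw [Lcomp_succ hi, span_le]
    rintro z ⟨v, hv, a, ha, rfl⟩
    exact hM.lie_mem i 1 v (ih hv) a (hL1 ha)

theorem dSeq_eq_zero_iff {i : ℕ} :
    dSeq E Mc F X Y i = 0 ↔ (twoStepCentraliser Mc i).restrictScalars F ⊓ Lcomp F X Y 1 = ⊥ :=
  have : FiniteDimensional F ↥((twoStepCentraliser Mc i).restrictScalars F ⊓ Lcomp F X Y 1) :=
    Submodule.finiteDimensional_of_le inf_le_right
  Submodule.finrank_eq_zero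

theorem Lcomp_ne_bot (hM : IsMaximalClass E M Mc) (h1 : Mc 1 = span E {X, Y}) {i : ℕ}
    (hi : 2 ≤ i) : Lcomp F X Y i ≠ ⊥ := by
  induction i, hi using Nat.le_induction with
  | base =>
    rw [Lcomp_two, Ne, span_singleton_eq_bot]
    exact hM.lie_ne_zero h1
  | succ i hi ih =>
    obtain ⟨u, hu, hu0⟩ := (Submodule.ne_bot_iff _).1 ih
    obtain ⟨a, ha, hua⟩ := exists_lie_ne_zero_of_mem_Lcomp_one (F := F) hM h1 hi
      (Lcomp_le_restrictScalars F hM h1 (by omega) hu) hu0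
    exact (Submodule.ne_bot_iff _).2 ⟨_, lie_mem_Lcomp_succ (by omega) hu ha, hua⟩

theorem finrank_map_ad_add_dSeq (hM : IsMaximalClass E M Mc) (h1 : Mc 1 = span E {X, Y})
    (hXY : LinearIndependent F ![X, Y]) {i : ℕ} (hi : 2 ≤ i) {u : M} (hu : u ∈ Mc i)
    (hu0 : u ≠ 0) :
    finrank F ((Lcomp F X Y 1).map (LieAlgebra.ad F M u)) + dSeq E Mc F X Y i = 2 := by
  have hker : LinearMap.ker (LieAlgebra.ad F M u) ⊓ Lcomp F X Y 1 =
      (twoStepCentraliser Mc i).restrictScalars F ⊓ Lcomp F X Y 1 := by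
    ext a
    simp only [mem_inf, LinearMap.mem_ker, LieAlgebra.ad_apply, restrictScalars_mem,
      hM.mem_twoStepCentraliser_iff hi hu hu0, and_congr_left_iff]
    exact fun ha => (and_iff_right (Lcomp_le_restrictScalars F hM h1 le_rfl ha)).symm
  have h := (LieAlgebra.ad F M u).finrank_map_add_finrank_ker_inf (Lcomp F X Y 1)
  rwa [hker, Lcomp_one, finrank_span_pair hXY] at h

theorem map_ad_eq_restrictScalars_of_dSeq_eq_zero (hM : IsMaximalClass E M Mc)
    (hEF : finrank F E = 2) (h1 : Mc 1 = span E {X, Y}) (hXY : LinearIndependent F ![X, Y])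
    {i : ℕ} (hi : 2 ≤ i) {u : M} (hu : u ∈ Mc i) (hu0 : u ≠ 0) (hd : dSeq E Mc F X Y i = 0) :
    (Lcomp F X Y 1).map (LieAlgebra.ad F M u) = (Mc (i + 1)).restrictScalars F := by
  have hfr := hM.finrank_restrictScalars hEF (i := i + 1) (by omega)
  have := Module.finite_of_finrank_pos (hfr ▸ two_pos)
  refine eq_of_le_of_finrank_le ?_ ?_
  · rintro _ ⟨a, ha, rfl⟩
    exact hM.lie_mem i 1 u hu a (Lcomp_le_restrictScalars F hM h1 le_rfl ha)
  · have := finrank_map_ad_add_dSeq hM h1 hXY hi hu hu0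
    omega

theorem map_ad_eq_Lcomp_succ_of_dSeq_eq_zero (hM : IsMaximalClass E M Mc)
    (hEF : finrank F E = 2) (h1 : Mc 1 = span E {X, Y}) (hXY : LinearIndependent F ![X, Y])
    {i : ℕ} (hi : 2 ≤ i) {u : M} (hu : u ∈ Lcomp F X Y i) (hu0 : u ≠ 0)
    (hd : dSeq E Mc F X Y i = 0) :
    (Lcomp F X Y 1).map (LieAlgebra.ad F M u) = Lcomp F X Y (i + 1) ∧
      Lcomp F X Y (i + 1) = (Mc (i + 1)).restrictScalars F := by
  have hmap := map_ad_eq_restrictScalars_of_dSeq_eq_zero hM hEF h1 hXY hi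
    (Lcomp_le_restrictScalars F hM h1 (by omega) hu) hu0 hd
  have hle := map_ad_le_Lcomp_succ (by omega) hu
  have hge := Lcomp_le_restrictScalars F hM h1 (i := i + 1) (by omega)
  exact ⟨le_antisymm hle (hmap ▸ hge), le_antisymm hge (hmap ▸ hle)⟩

theorem Lcomp_eq_restrictScalars_of_ge (hM : IsMaximalClass E M Mc) (hEF : finrank F E = 2)
    (h1 : Mc 1 = span E {X, Y}) (hXY : LinearIndependent F ![X, Y]) {m : ℕ} (hm : 2 ≤ m)
    (hLm : Lcomp F X Y m = (Mc m).restrictScalars F)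
    (hd : ∀ j, m ≤ j → Lcomp F X Y j = (Mc j).restrictScalars F → dSeq E Mc F X Y j = 0)
    {j : ℕ} (hj : m ≤ j) : Lcomp F X Y j = (Mc j).restrictScalars F := by
  induction j, hj using Nat.le_induction with
  | base => exact hLm
  | succ j hj ih =>
    obtain ⟨u, hu, hu0⟩ := hM.exists_ne_zero (i := j) (by omega)
    exact (map_ad_eq_Lcomp_succ_of_dSeq_eq_zero hM hEF h1 hXY (by omega)
      (ih.symm ▸ hu : u ∈ Lcomp F X Y j) hu0 (hd j hj ih)).2

theorem dSeq_eq_zero_of_coveringProperty (hM : IsMaximalClass E M Mc) (hEF : finrank F E = 2)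
    (h1 : Mc 1 = span E {X, Y}) (hXY : LinearIndependent F ![X, Y])
    (hcov : CoveringProperty F X Y) {i : ℕ} (hi : 2 ≤ i)
    (hL : Lcomp F X Y i = (Mc i).restrictScalars F) : dSeq E Mc F X Y i = 0 := by
  obtain ⟨u, hu, hu0⟩ := hM.exists_ne_zero hi
  obtain ⟨ε, hε⟩ := exists_notMem_range_algebraMap_of_finrank_ne_one (F := F) (E := E) (by omega)
  have hε0 : ε ≠ 0 := fun h => hε ⟨0, by rw [map_zero, h]⟩
  have hcov' : ∀ v ∈ Mc i, v ≠ 0 →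
      (Lcomp F X Y 1).map (LieAlgebra.ad F M v) = Lcomp F X Y (i + 1) := fun v hv hv0 => by
    rw [← span_lie_eq_map_ad]
    exact hcov i (by omega) v (hL ▸ hv) hv0
  obtain ⟨a, ha, hua⟩ := exists_lie_ne_zero_of_mem_Lcomp_one (F := F) hM h1 hi hu hu0
  have hεmem : ε • ⁅u, a⁆ ∈ (Lcomp F X Y 1).map (LieAlgebra.ad F M u) := by
    rw [hcov' u hu hu0, ← hcov' (ε • u) (smul_mem _ ε hu) (smul_ne_zero hε0 hu0)]
    exact ⟨a, ha, by rw [LieAlgebra.ad_apply, smul_lie]⟩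
  by_contra hd
  have hmem : ⁅u, a⁆ ∈ (Lcomp F X Y 1).map (LieAlgebra.ad F M u) := mem_map_of_mem ha
  have hV : (Lcomp F X Y 1).map (LieAlgebra.ad F M u) = F ∙ ⁅u, a⁆ := by
    refine (eq_of_le_of_finrank_le ((span_singleton_le_iff_mem _ _).2 hmem) ?_).symm
    have := finrank_map_ad_add_dSeq hM h1 hXY hi hu hu0
    rw [finrank_span_singleton hua]
    omega
  obtain ⟨r, hr⟩ := mem_span_singleton.1 (hV ▸ hεmem)
  refine hε ⟨r, ?_⟩
  refine sub_eq_zero.1 ((smul_eq_zero.1 (?_ : (algebraMap F E r - ε) • ⁅u, a⁆ = 0)).resolve_right hua)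
  rw [sub_smul, algebraMap_smul, hr, sub_self]

theorem dSeq_two_eq_zero (hM : IsMaximalClass E M Mc) {m : ℕ} (hm : 2 ≤ m)
    (hd : ∀ j, m ≤ j → dSeq E Mc F X Y j = 0) : dSeq E Mc F X Y 2 = 0 := by
  refine dSeq_eq_zero_iff.2 (eq_bot_iff.2 ?_)
  rintro c ⟨hc, hcL⟩
  rcases hM.mem_twoStepCentraliser_or_succ hc hm with hcm | hcm
  · exact (dSeq_eq_zero_iff.1 (hd m le_rfl)).le ⟨hcm, hcL⟩
  · exact (dSeq_eq_zero_iff.1 (hd (m + 1) (by omega))).le ⟨hcm, hcL⟩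

theorem Lcomp_three_eq_restrictScalars (hM : IsMaximalClass E M Mc) (hEF : finrank F E = 2)
    (h1 : Mc 1 = span E {X, Y}) (hXY : LinearIndependent F ![X, Y])
    (hd : dSeq E Mc F X Y 2 = 0) : Lcomp F X Y 3 = (Mc 3).restrictScalars F :=
  (map_ad_eq_Lcomp_succ_of_dSeq_eq_zero hM hEF h1 hXY le_rfl
    (by rw [Lcomp_two]; exact mem_span_singleton_self _) (hM.lie_ne_zero h1) hd).2

theorem dSeq_eq_zero_of_coveringProperty_of_ge (hM : IsMaximalClass E M Mc)
    (hEF : finrank F E = 2) (h1 : Mc 1 = span E {X, Y}) (hXY : LinearIndependent F ![X, Y])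
    (hcov : CoveringProperty F X Y) {m : ℕ} (hm : 2 ≤ m)
    (hLm : Lcomp F X Y m = (Mc m).restrictScalars F) {j : ℕ} (hj : m ≤ j) :
    dSeq E Mc F X Y j = 0 :=
  have hd {j : ℕ} (hj : m ≤ j) := dSeq_eq_zero_of_coveringProperty hM hEF h1 hXY hcov (i := j)
    (by omega)
  hd hj (Lcomp_eq_restrictScalars_of_ge hM hEF h1 hXY hm hLm (fun _ hj => hd hj) hj)

theorem Lcomp_eq_restrictScalars_of_finrank_ne_one (hM : IsMaximalClass E M Mc)
    (hEF : finrank F E = 2) (h1 : Mc 1 = span E {X, Y}) {i : ℕ} (hi : 2 ≤ i)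
    (hL : finrank F (Lcomp F X Y i) ≠ 1) : Lcomp F X Y i = (Mc i).restrictScalars F := by
  have hfr := hM.finrank_restrictScalars hEF hi
  have := Module.finite_of_finrank_pos (hfr ▸ two_pos)
  have hle := Lcomp_le_restrictScalars F hM h1 (i := i) (by omega)
  have := Submodule.finiteDimensional_of_le hle
  refine eq_of_le_of_finrank_le hle ?_
  have := Submodule.finrank_mono hle
  have := Submodule.finrank_eq_zero.not.2 (Lcomp_ne_bot hM h1 (F := F) hi)
  omega

theorem dSeq_eq_zero_of_thin (hM : IsMaximalClass E M Mc) (hEF : finrank F E = 2)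
    (h1 : Mc 1 = span E {X, Y}) (hXY : LinearIndependent F ![X, Y])
    (hcov : CoveringProperty F X Y)
    (hnmax : ¬ ∀ i : ℕ, 2 ≤ i → finrank F (Lcomp F X Y i) = 1) {i : ℕ} (hi : 2 ≤ i) :
    dSeq E Mc F X Y i = 0 := by
  push Not at hnmax
  obtain ⟨m, hm, hLm⟩ := hnmax
  have hd2 := dSeq_two_eq_zero hM hm fun j hj => dSeq_eq_zero_of_coveringProperty_of_ge hM hEF
    h1 hXY hcov hm (Lcomp_eq_restrictScalars_of_finrank_ne_one hM hEF h1 hm hLm) hj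
  rcases hi.eq_or_lt with rfl | hi
  · exact hd2
  · exact dSeq_eq_zero_of_coveringProperty_of_ge hM hEF h1 hXY hcov (m := 3) (by omega)
      (Lcomp_three_eq_restrictScalars hM hEF h1 hXY hd2) hi

theorem Lcomp_eq_restrictScalars_of_dSeq_eq_zero (hM : IsMaximalClass E M Mc)
    (hEF : finrank F E = 2) (h1 : Mc 1 = span E {X, Y}) (hXY : LinearIndependent F ![X, Y])
    (hd : ∀ i : ℕ, 2 ≤ i → dSeq E Mc F X Y i = 0) {i : ℕ} (hi : 3 ≤ i) :
    Lcomp F X Y i = (Mc i).restrictScalars F :=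
  Lcomp_eq_restrictScalars_of_ge hM hEF h1 hXY (by omega)
    (Lcomp_three_eq_restrictScalars hM hEF h1 hXY (hd 2 le_rfl)) (fun j hj _ => hd j (by omega)) hi

theorem coveringProperty_of_dSeq_eq_zero (hM : IsMaximalClass E M Mc) (hEF : finrank F E = 2)
    (h1 : Mc 1 = span E {X, Y}) (hXY : LinearIndependent F ![X, Y])
    (hd : ∀ i : ℕ, 2 ≤ i → dSeq E Mc F X Y i = 0) : CoveringProperty F X Y := by
  intro i hi u hu hu0
  rw [span_lie_eq_map_ad]
  rcases hi.eq_or_lt with rfl | hi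
  · exact map_ad_Lcomp_one hu hu0
  · exact (map_ad_eq_Lcomp_succ_of_dSeq_eq_zero hM hEF h1 hXY hi hu hu0 (hd i hi)).1

theorem finrank_Lcomp_of_dSeq_eq_zero (hM : IsMaximalClass E M Mc) (hEF : finrank F E = 2)
    (h1 : Mc 1 = span E {X, Y}) (hXY : LinearIndependent F ![X, Y])
    (hd : ∀ i : ℕ, 2 ≤ i → dSeq E Mc F X Y i = 0) {i : ℕ} (hi : 1 ≤ i) (hi2 : i ≠ 2) :
    finrank F (Lcomp F X Y i) = 2 := by
  rcases hi.eq_or_lt with rfl | hi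
  · exact finrank_span_pair hXY
  · rw [Lcomp_eq_restrictScalars_of_dSeq_eq_zero hM hEF h1 hXY hd (by omega),
      hM.finrank_restrictScalars hEF (by omega)]

end MaximalClassOverSubfield

/-- if `[E : F] = 2`, then `L` is thin (covering property, and not of maximal
class over `F`) if and only if `d_i = 0` for every `i ≥ 2`; in that case `dim_F L_i = 2`
for every `i ≥ 1` with `i ≠ 2`, and `dim_F L_2 = 1`. -/
theorem stmt_8 (E : Type*) [Field E] (M : Type*) [LieRing M] [LieAlgebra E M]
    (Mc : ℕ → Submodule E M) (hM : IsMaximalClass E M Mc)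
    (F : Type*) [Field F] [Algebra F E] [LieAlgebra F M] [IsScalarTower F E M]
    (hEF : Module.finrank F E = 2)
    (X Y : M) (hX : X ∈ Mc 1) (hY : Y ∈ Mc 1) (hXY : LinearIndependent E ![X, Y]) :
    ((CoveringProperty F X Y ∧
        ¬ (∀ i : ℕ, 2 ≤ i → Module.finrank F ↥(Lcomp F X Y i) = 1)) ↔
      (∀ i : ℕ, 2 ≤ i → dSeq E Mc F X Y i = 0)) ∧
    ((∀ i : ℕ, 2 ≤ i → dSeq E Mc F X Y i = 0) →
      (∀ i : ℕ, 1 ≤ i → i ≠ 2 → Module.finrank F ↥(Lcomp F X Y i) = 2) ∧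
      Module.finrank F ↥(Lcomp F X Y 2) = 1) := by
  have h1 := hM.eq_span_pair hX hY hXY
  have hXYF : LinearIndependent F ![X, Y] := hXY.restrict_scalars' F
  have hL2 : finrank F (Lcomp F X Y 2) = 1 := by
    rw [Lcomp_two, finrank_span_singleton (hM.lie_ne_zero h1)]
  refine ⟨⟨fun ⟨hcov, hnmax⟩ _ hi => dSeq_eq_zero_of_thin hM hEF h1 hXYF hcov hnmax hi,
    fun hd => ⟨coveringProperty_of_dSeq_eq_zero hM hEF h1 hXYF hd, fun hmax => ?_⟩⟩,
    fun hd => ⟨fun _ hi hi2 => finrank_Lcomp_of_dSeq_eq_zero hM hEF h1 hXYF hd hi hi2, hL2⟩⟩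
  have := finrank_Lcomp_of_dSeq_eq_zero hM hEF h1 hXYF hd (i := 3) (by omega) (by omega)
  rw [hmax 3 (by omega)] at this
  omega
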